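/- Let R and S be rings, E an R-S-bimodule, and I an injective left R-module. Then the left S-module Hom_R(E,I) is cotorsion, i.e., Ext^1_S(F, Hom_R(E,I)) = 0 for every flat left S-module F. -/

import Mathlib

open CategoryTheory TensorProduct

universe u

set_option maxHeartbeats 1000000
noncomputable section

namespace NCT

variable (R : Type u) [Ring R]

/-- The subgroup of relations defining the balanced tensor product `M ⊗_R N`
of a right `R`-module `M` and a left `R`-module `N`. -/
def rel (M N : Type u) [AddCommGroup M] [Module Rᵐᵒᵖ M] [AddCommGroup N] [Module R N] :
    AddSubgroup (M ⊗[ℤ] N) :=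
  AddSubgroup.closure {x | ∃ (r : R) (m : M) (n : N),
    x = (MulOpposite.op r • m) ⊗ₜ[ℤ] n - m ⊗ₜ[ℤ] (r • n)}

/-- The balanced tensor product `M ⊗_R N` over a (possibly noncommutative) ring `R`. -/
def Tens (M N : Type u) [AddCommGroup M] [Module Rᵐᵒᵖ M] [AddCommGroup N] [Module R N] :
    Type u :=
  (M ⊗[ℤ] N) ⧸ rel R M N

instance (M N : Type u) [AddCommGroup M] [Module Rᵐᵒᵖ M] [AddCommGroup N] [Module R N] :
    AddCommGroup (Tens R M N) :=
  inferInstanceAs (AddCommGroup ((M ⊗[ℤ] N) ⧸ rel R M N))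

variable {R}

variable {M M' M'' N N' N'' : Type u}
  [AddCommGroup M] [Module Rᵐᵒᵖ M] [AddCommGroup M'] [Module Rᵐᵒᵖ M']
  [AddCommGroup M''] [Module Rᵐᵒᵖ M'']
  [AddCommGroup N] [Module R N] [AddCommGroup N'] [Module R N']
  [AddCommGroup N''] [Module R N'']

/-- The canonical projection. -/
def mk : M ⊗[ℤ] N →+ Tens R M N := QuotientAddGroup.mk' (rel R M N)

lemma mk_surjective : Function.Surjective (mk (R := R) (M := M) (N := N)) :=
  QuotientAddGroup.mk'_surjective _

private def intMap (f : M →ₗ[Rᵐᵒᵖ] M') (g : N →ₗ[R] N') : M ⊗[ℤ] N →ₗ[ℤ] M' ⊗[ℤ] N' :=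
  TensorProduct.map f.toAddMonoidHom.toIntLinearMap g.toAddMonoidHom.toIntLinearMap

private lemma intMap_id :
    intMap (LinearMap.id : M →ₗ[Rᵐᵒᵖ] M) (LinearMap.id : N →ₗ[R] N) = LinearMap.id :=
  TensorProduct.ext' fun _ _ => rfl

private lemma intMap_comp (f' : M' →ₗ[Rᵐᵒᵖ] M'') (f : M →ₗ[Rᵐᵒᵖ] M')
    (g' : N' →ₗ[R] N'') (g : N →ₗ[R] N') :
    intMap (f'.comp f) (g'.comp g) = (intMap f' g').comp (intMap f g) :=
  TensorProduct.ext' fun _ _ => rfl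

private lemma rel_le (f : M →ₗ[Rᵐᵒᵖ] M') (g : N →ₗ[R] N') :
    rel R M N ≤ (rel R M' N').comap (intMap f g).toAddMonoidHom := by
  rw [rel, AddSubgroup.closure_le]
  rintro x ⟨r, m, n, rfl⟩
  simp only [SetLike.mem_coe, AddSubgroup.mem_comap, LinearMap.toAddMonoidHom_coe, map_sub]
  apply AddSubgroup.subset_closure
  refine ⟨r, f m, g n, ?_⟩
  simp [intMap, f.map_smul, g.map_smul]
  show (f (MulOpposite.op r • m)) ⊗ₜ[ℤ] g n - f m ⊗ₜ[ℤ] g (r • n) = _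
  rw [f.map_smul, g.map_smul]

/-- Functoriality of the balanced tensor product. -/
def tmap (f : M →ₗ[Rᵐᵒᵖ] M') (g : N →ₗ[R] N') : Tens R M N →+ Tens R M' N' :=
  QuotientAddGroup.map _ _ (intMap f g).toAddMonoidHom (rel_le f g)

lemma tmap_mk (f : M →ₗ[Rᵐᵒᵖ] M') (g : N →ₗ[R] N') (x : M ⊗[ℤ] N) :
    tmap f g (mk x) = mk (intMap f g x) := rfl

lemma tmap_id_apply (x : Tens R M N) :
    tmap (LinearMap.id : M →ₗ[Rᵐᵒᵖ] M) (LinearMap.id : N →ₗ[R] N) x = x := by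
  obtain ⟨y, rfl⟩ := mk_surjective x
  rw [tmap_mk, intMap_id]
  rfl

lemma tmap_tmap (f' : M' →ₗ[Rᵐᵒᵖ] M'') (f : M →ₗ[Rᵐᵒᵖ] M')
    (g' : N' →ₗ[R] N'') (g : N →ₗ[R] N') (x : Tens R M N) :
    tmap f' g' (tmap f g x) = tmap (f'.comp f) (g'.comp g) x := by
  obtain ⟨y, rfl⟩ := mk_surjective x
  rw [tmap_mk, tmap_mk, tmap_mk, intMap_comp]
  rfl

lemma tmap_add_left (f₁ f₂ : M →ₗ[Rᵐᵒᵖ] M') (g : N →ₗ[R] N') :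
    tmap (f₁ + f₂) g = tmap f₁ g + tmap f₂ g := by
  ext x
  obtain ⟨y, rfl⟩ := mk_surjective x
  have h : intMap (f₁ + f₂) g = intMap f₁ g + intMap f₂ g := by
    apply TensorProduct.ext'
    intro m n
    simp [intMap, add_tmul]
    show (f₁ + f₂) m ⊗ₜ[ℤ] g n = f₁ m ⊗ₜ[ℤ] g n + f₂ m ⊗ₜ[ℤ] g n
    rw [LinearMap.add_apply, add_tmul]
  simp only [AddMonoidHom.add_apply, tmap_mk, h, LinearMap.add_apply]
  rw [map_add]

lemma tmap_add_right (f : M →ₗ[Rᵐᵒᵖ] M') (g₁ g₂ : N →ₗ[R] N') :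
    tmap f (g₁ + g₂) = tmap f g₁ + tmap f g₂ := by
  ext x
  obtain ⟨y, rfl⟩ := mk_surjective x
  have h : intMap f (g₁ + g₂) = intMap f g₁ + intMap f g₂ := by
    apply TensorProduct.ext'
    intro m n
    simp [intMap, tmul_add]
    show f m ⊗ₜ[ℤ] (g₁ + g₂) n = f m ⊗ₜ[ℤ] g₁ n + f m ⊗ₜ[ℤ] g₂ n
    rw [LinearMap.add_apply, tmul_add]
  simp only [AddMonoidHom.add_apply, tmap_mk, h, LinearMap.add_apply]
  rw [map_add]


lemma tmap_zero_left (g : N →ₗ[R] N') :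
    tmap (0 : M →ₗ[Rᵐᵒᵖ] M') g = 0 := by
  ext x
  obtain ⟨y, rfl⟩ := mk_surjective x
  have h : intMap (0 : M →ₗ[Rᵐᵒᵖ] M') g = 0 := by
    apply TensorProduct.ext'
    intro m n
    simp [intMap]
    show (0 : M →ₗ[Rᵐᵒᵖ] M') m ⊗ₜ[ℤ] g n = 0
    rw [LinearMap.zero_apply, zero_tmul]
  rw [tmap_mk, h]
  rfl

lemma tmap_zero_right (f : M →ₗ[Rᵐᵒᵖ] M') :
    tmap f (0 : N →ₗ[R] N') = 0 := by
  ext x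
  obtain ⟨y, rfl⟩ := mk_surjective x
  have h : intMap f (0 : N →ₗ[R] N') = 0 := by
    apply TensorProduct.ext'
    intro m n
    simp [intMap]
    show f m ⊗ₜ[ℤ] (0 : N →ₗ[R] N') n = 0
    rw [LinearMap.zero_apply, tmul_zero]
  rw [tmap_mk, h]
  rfl

variable (R)

/-- The balanced tensor product, as a bifunctor on module categories. -/
def tensorBifunctor : ModuleCat.{u} Rᵐᵒᵖ ⥤ ModuleCat.{u} R ⥤ AddCommGrpCat.{u} where
  obj M :=
    { obj := fun N => AddCommGrpCat.of (Tens R M N)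
      map := fun g => AddCommGrpCat.ofHom (tmap LinearMap.id g.hom)
      map_id := fun N => by
        ext x
        exact tmap_id_apply x
      map_comp := fun g g' => by
        ext x
        show tmap LinearMap.id (LinearMap.comp g'.hom g.hom) x
          = tmap LinearMap.id g'.hom (tmap LinearMap.id g.hom x)
        rw [tmap_tmap, LinearMap.id_comp] }
  map f :=
    { app := fun N => AddCommGrpCat.ofHom (tmap f.hom LinearMap.id)
      naturality := fun N N' g => by
        ext x
        show tmap f.hom LinearMap.id (tmap LinearMap.id g.hom x)
          = tmap LinearMap.id g.hom (tmap f.hom LinearMap.id x)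
        rw [tmap_tmap, tmap_tmap, LinearMap.id_comp, LinearMap.comp_id,
          LinearMap.id_comp, LinearMap.comp_id] }
  map_id := fun M => by
    ext N x
    exact tmap_id_apply x
  map_comp := fun f f' => by
    ext N x
    show tmap (LinearMap.comp f'.hom f.hom) LinearMap.id x
      = tmap f'.hom LinearMap.id (tmap f.hom LinearMap.id x)
    rw [tmap_tmap, LinearMap.id_comp]

instance (M : ModuleCat.{u} Rᵐᵒᵖ) : ((tensorBifunctor R).obj M).Additive where
  map_add := by
    intro N N' g g'
    ext x
    show tmap LinearMap.id (g.hom + g'.hom) x = _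
    rw [tmap_add_right]
    rfl

instance (N : ModuleCat.{u} R) : ((tensorBifunctor R).flip.obj N).Additive where
  map_add := by
    intro M M' f f'
    ext x
    show tmap (f.hom + f'.hom) LinearMap.id x = _
    rw [tmap_add_left]
    rfl


instance : (tensorBifunctor R).PreservesZeroMorphisms where
  map_zero := by
    intro M M'
    ext N x
    show tmap (0 : ↑M →ₗ[Rᵐᵒᵖ] ↑M') LinearMap.id x = 0
    rw [tmap_zero_left]
    rfl

/-- A right `R`-module `M` is flat if `M ⊗_R -` preserves injectivity. -/
def FlatRight (M : Type u) [AddCommGroup M] [Module Rᵐᵒᵖ M] : Prop :=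
  ∀ (N N' : Type u) [AddCommGroup N] [Module R N] [AddCommGroup N'] [Module R N']
    (g : N →ₗ[R] N'), Function.Injective g →
      Function.Injective (tmap (LinearMap.id : M →ₗ[Rᵐᵒᵖ] M) g)

/-- A left `R`-module `N` is flat if `- ⊗_R N` preserves injectivity. -/
def FlatLeft (N : Type u) [AddCommGroup N] [Module R N] : Prop :=
  ∀ (M M' : Type u) [AddCommGroup M] [Module Rᵐᵒᵖ M] [AddCommGroup M'] [Module Rᵐᵒᵖ M']
    (f : M →ₗ[Rᵐᵒᵖ] M'), Function.Injective f →
      Function.Injective (tmap f (LinearMap.id : N →ₗ[R] N))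

end NCT

open CategoryTheory Opposite

section

variable (R : Type u) [Ring R] (S : Type u) [Ring S]
variable (E : Type u) [AddCommGroup E] [Module R E] [Module Sᵐᵒᵖ E] [SMulCommClass R Sᵐᵒᵖ E]

/-- Right multiplication by `s ∈ S` on an `R`-`S`-bimodule `E`, as an `R`-linear map. -/
def rightMulLin (s : Sᵐᵒᵖ) : E →ₗ[R] E where
  toFun e := s • e
  map_add' := smul_add s
  map_smul' r e := (smul_comm r s e).symm

variable (J : Type u) [AddCommGroup J] [Module R J]

/-- The left `S`-module structure on `Hom_R(E, J)` induced by the right `S`-module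
structure on the `R`-`S`-bimodule `E`: `(s • f) e = f (e • s)`. -/
instance homLeftModule : Module S (E →ₗ[R] J) where
  smul s f := f.comp (rightMulLin R S E (MulOpposite.op s))
  one_smul f := by
    ext e
    show f ((MulOpposite.op (1 : S)) • e) = f e
    rw [MulOpposite.op_one, one_smul]
  mul_smul s t f := by
    ext e
    show f ((MulOpposite.op (s * t)) • e) = f (MulOpposite.op t • MulOpposite.op s • e)
    rw [MulOpposite.op_mul, mul_smul]
  smul_zero s := by ext e; rfl
  smul_add s f g := by ext e; rfl
  add_smul s t f := by
    ext e
    show f ((MulOpposite.op (s + t)) • e) = f (MulOpposite.op s • e) + f (MulOpposite.op t • e)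
    rw [← map_add, MulOpposite.op_add, add_smul]
  zero_smul f := by
    ext e
    show f ((MulOpposite.op (0 : S)) • e) = 0
    rw [MulOpposite.op_zero, zero_smul, map_zero]

end

/-!
`Ext¹_S(F, C)` is computed from a projective resolution `P → F`: it vanishes once every
`S`-linear map from the syzygy `K = ker (P₀ → F)` to `C` extends to `P₀`. For
`C = Hom_R(E, I)`, such maps correspond by adjunction to `R`-linear maps `E ⊗_S K → I`, and
these extend along `E ⊗_S K → E ⊗_S P₀` because `I` is injective and this map is injective:
as `F` is flat, a diagram chase against a free module mapping onto `E` shows that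
`Tor₁(E, F)` vanishes.
-/

theorem LinearMap.exists_comp_eq_of_ker_le {R M N P : Type*} [Ring R] [AddCommGroup M]
    [Module R M] [AddCommGroup N] [Module R N] [AddCommGroup P] [Module R P]
    {f : M →ₗ[R] N} (hf : Function.Surjective f) {g : M →ₗ[R] P} (h : ker f ≤ ker g) :
    ∃ φ : N →ₗ[R] P, φ ∘ₗ f = g :=
  ⟨(ker f).liftQ g h ∘ₗ (f.quotKerEquivOfSurjective hf).symm.toLinearMap, by
    ext m; simp [LinearMap.quotKerEquivOfSurjective_symm_apply]⟩

theorem QuotientAddGroup.map_exact {X Y Z : Type*} [AddCommGroup X] [AddCommGroup Y]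
    [AddCommGroup Z] {f : X →+ Y} {g : Y →+ Z} (hfg : Function.Exact f g)
    {A : AddSubgroup X} {B : AddSubgroup Y} {C : AddSubgroup Z}
    (hA : A ≤ B.comap f) (hB : B ≤ C.comap g) (hC : C ≤ B.map g) :
    Function.Exact (QuotientAddGroup.map A B f hA) (QuotientAddGroup.map B C g hB) := by
  intro y
  induction y using QuotientAddGroup.induction_on with | H y => ?_
  simp only [QuotientAddGroup.map_mk, QuotientAddGroup.eq_zero_iff]
  constructor
  · intro hy
    obtain ⟨b, hb, hgb⟩ := hC hy
    obtain ⟨x, hx⟩ := (hfg (y - b)).1 (by rw [map_sub, hgb, sub_self])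
    refine ⟨x, ?_⟩
    rw [QuotientAddGroup.map_mk, hx, QuotientAddGroup.mk_sub,
      (QuotientAddGroup.eq_zero_iff b).2 hb, sub_zero]
  · rintro ⟨x, hx⟩
    induction x using QuotientAddGroup.induction_on with | H x => ?_
    rw [QuotientAddGroup.map_mk, QuotientAddGroup.eq] at hx
    simpa [hfg.apply_apply_eq_zero] using hB hx

namespace CategoryTheory.ProjectiveResolution

theorem subsingleton_ext_one_of_forall_factors {A : Type*} [Ring A] {𝒞 : Type*} [Category 𝒞]
    [Abelian 𝒞] [Linear A 𝒞] [EnoughProjectives 𝒞] {X : 𝒞} (P : ProjectiveResolution X) (C : 𝒞)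
    (h : ∀ x : P.complex.X 1 ⟶ C, P.complex.d 2 1 ≫ x = 0 →
      ∃ g : P.complex.X 0 ⟶ C, P.complex.d 1 0 ≫ g = x) :
    Subsingleton (((Ext A 𝒞 1).obj (op X)).obj C) := by
  suffices Limits.IsZero (((Ext A 𝒞 1).obj (op X)).obj C) from
    ModuleCat.subsingleton_of_isZero this
  refine Limits.IsZero.of_iso ?_ (P.isoExt 1 C)
  rw [← HomologicalComplex.exactAt_iff_isZero_homology,
    HomologicalComplex.exactAt_iff' _ 0 1 2 (by simp) (by simp), ShortComplex.moduleCat_exact_iff]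
  exact h

theorem subsingleton_ext_one_of_forall_extend {S : Type u} [Ring S] {X : ModuleCat.{u} S}
    (P : ProjectiveResolution X) (C : ModuleCat.{u} S)
    (h : ∀ φ : LinearMap.ker (P.π.f 0).hom →ₗ[S] C,
      ∃ g : P.complex.X 0 →ₗ[S] C, g ∘ₗ (LinearMap.ker (P.π.f 0).hom).subtype = φ) :
    Subsingleton (((Ext ℤ (ModuleCat.{u} S) 1).obj (op X)).obj C) := by
  refine P.subsingleton_ext_one_of_forall_factors C fun x hx => ?_
  have h₀ := (ShortComplex.moduleCat_exact_iff_range_eq_ker _).mp P.exact₀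
  have h₁ := (ShortComplex.moduleCat_exact_iff_range_eq_ker _).mp (P.exact_succ 0)
  let d := (P.complex.d 1 0).hom.codRestrict (LinearMap.ker (P.π.f 0).hom) fun v =>
    h₀ ▸ LinearMap.mem_range_self _ v
  have hd : Function.Surjective d := by
    rintro ⟨k, hk⟩
    obtain ⟨v, rfl⟩ := (h₀ ▸ hk : k ∈ LinearMap.range (P.complex.d 1 0).hom)
    exact ⟨v, rfl⟩
  have hker : LinearMap.ker d ≤ LinearMap.ker x.hom := by
    rw [show LinearMap.ker d = _ from LinearMap.ker_codRestrict _ _ _, ← h₁]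
    rintro _ ⟨w, rfl⟩
    exact congr($hx w)
  obtain ⟨φ, hφ⟩ := LinearMap.exists_comp_eq_of_ker_le hd hker
  obtain ⟨g, hg⟩ := h φ
  refine ⟨ModuleCat.ofHom g, ModuleCat.hom_ext ?_⟩
  rw [← hφ, ← hg]
  rfl

end CategoryTheory.ProjectiveResolution

namespace NCT

section Exactness

variable {R : Type u} [Ring R] {M M' M'' N N' N'' : Type u}
  [AddCommGroup M] [Module Rᵐᵒᵖ M] [AddCommGroup M'] [Module Rᵐᵒᵖ M']
  [AddCommGroup M''] [Module Rᵐᵒᵖ M'']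
  [AddCommGroup N] [Module R N] [AddCommGroup N'] [Module R N']
  [AddCommGroup N''] [Module R N'']

lemma mk_op_smul_tmul (r : R) (m : M) (n : N) :
    (mk ((MulOpposite.op r • m) ⊗ₜ[ℤ] n) : Tens R M N) = mk (m ⊗ₜ[ℤ] (r • n)) := by
  rw [← sub_eq_zero, ← map_sub]
  exact (QuotientAddGroup.eq_zero_iff _).2 (AddSubgroup.subset_closure ⟨r, m, n, rfl⟩)

def lift {A : Type*} [AddCommGroup A] (φ : M →ₗ[ℤ] N →ₗ[ℤ] A)
    (hφ : ∀ (r : R) m n, φ (MulOpposite.op r • m) n = φ m (r • n)) : Tens R M N →+ A :=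
  QuotientAddGroup.lift _ (TensorProduct.lift φ).toAddMonoidHom <| by
    rw [rel, AddSubgroup.closure_le]
    rintro _ ⟨r, m, n, rfl⟩
    simp [hφ]

lemma tmap_comm (f : M →ₗ[Rᵐᵒᵖ] M') (g : N →ₗ[R] N') (x : Tens R M N) :
    tmap f LinearMap.id (tmap LinearMap.id g x) = tmap LinearMap.id g (tmap f LinearMap.id x) := by
  simp only [tmap_tmap, LinearMap.id_comp, LinearMap.comp_id]

lemma tmap_surjective {f : M →ₗ[Rᵐᵒᵖ] M'} {g : N →ₗ[R] N'}
    (hf : Function.Surjective f) (hg : Function.Surjective g) :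
    Function.Surjective (tmap f g) := by
  have hfg : Function.Surjective (intMap f g) := TensorProduct.map_surjective hf hg
  intro y
  obtain ⟨x, rfl⟩ := mk_surjective y
  obtain ⟨z, rfl⟩ := hfg x
  exact ⟨mk z, rfl⟩

lemma rel_le_map_intMap {f : M →ₗ[Rᵐᵒᵖ] M'} {g : N →ₗ[R] N'}
    (hf : Function.Surjective f) (hg : Function.Surjective g) :
    rel R M' N' ≤ (rel R M N).map (intMap f g).toAddMonoidHom := by
  rw [rel, AddSubgroup.closure_le]
  rintro _ ⟨r, m, n, rfl⟩
  obtain ⟨m, rfl⟩ := hf m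
  obtain ⟨n, rfl⟩ := hg n
  refine ⟨_, AddSubgroup.subset_closure ⟨r, m, n, rfl⟩, ?_⟩
  simp only [LinearMap.toAddMonoidHom_coe, map_sub]
  change f (_ • m) ⊗ₜ[ℤ] g n - f m ⊗ₜ[ℤ] g (r • n) = _
  rw [f.map_smul, g.map_smul]

private lemma intMap_id_right (f : M →ₗ[Rᵐᵒᵖ] M') :
    intMap f (LinearMap.id : N →ₗ[R] N) = LinearMap.rTensor N f.toAddMonoidHom.toIntLinearMap :=
  TensorProduct.ext' fun _ _ => rfl

private lemma intMap_id_left (g : N →ₗ[R] N') :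
    intMap (LinearMap.id : M →ₗ[Rᵐᵒᵖ] M) g = LinearMap.lTensor M g.toAddMonoidHom.toIntLinearMap :=
  TensorProduct.ext' fun _ _ => rfl

theorem tmap_exact_left {f : M →ₗ[Rᵐᵒᵖ] M'} {g : M' →ₗ[Rᵐᵒᵖ] M''} (hfg : Function.Exact f g)
    (hg : Function.Surjective g) :
    Function.Exact (tmap f (LinearMap.id : N →ₗ[R] N)) (tmap g LinearMap.id) := by
  refine QuotientAddGroup.map_exact ?_ _ _ (rel_le_map_intMap hg Function.surjective_id)
  rw [intMap_id_right, intMap_id_right]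
  exact rTensor_exact N (f := f.toAddMonoidHom.toIntLinearMap)
    (g := g.toAddMonoidHom.toIntLinearMap) hfg hg

theorem tmap_exact_right {f : N →ₗ[R] N'} {g : N' →ₗ[R] N''} (hfg : Function.Exact f g)
    (hg : Function.Surjective g) :
    Function.Exact (tmap (LinearMap.id : M →ₗ[Rᵐᵒᵖ] M) f) (tmap LinearMap.id g) := by
  refine QuotientAddGroup.map_exact ?_ _ _ (rel_le_map_intMap Function.surjective_id hg)
  rw [intMap_id_left, intMap_id_left]
  exact lTensor_exact M (f := f.toAddMonoidHom.toIntLinearMap)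
    (g := g.toAddMonoidHom.toIntLinearMap) hfg hg

end Exactness

section Free

variable {R : Type u} [Ring R] {ι : Type u}
  {N N' : Type u} [AddCommGroup N] [Module R N] [AddCommGroup N'] [Module R N']

variable (R ι N) in
/-- `(f, n) ↦ (i ↦ f i • n)`, which identifies `(ι →₀ Rᵐᵒᵖ) ⊗_R N` with `ι →₀ N`. -/
def finsuppSMul : (ι →₀ Rᵐᵒᵖ) →ₗ[ℤ] N →ₗ[ℤ] (ι →₀ N) :=
  LinearMap.mk₂ ℤ (fun f n => f.mapRange (fun s => s.unop • n) (by simp))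
    (fun _ _ _ => by ext; simp [add_smul])
    (fun _ _ _ => by
      ext; simp only [Finsupp.mapRange_apply, Finsupp.coe_smul, Pi.smul_apply,
        MulOpposite.unop_smul, smul_assoc])
    (fun _ _ _ => by ext; simp)
    (fun _ _ _ => by
      ext; simp only [Finsupp.mapRange_apply, Finsupp.coe_smul, Pi.smul_apply]
      exact smul_comm _ _ _)

variable (R ι N) in
def toFinsupp : Tens R (ι →₀ Rᵐᵒᵖ) N →+ (ι →₀ N) :=
  lift (finsuppSMul R ι N) fun r f n => by ext; simp [finsuppSMul, mul_smul]

variable (R ι N) in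
def ofFinsupp : (ι →₀ N) →+ Tens R (ι →₀ Rᵐᵒᵖ) N :=
  Finsupp.liftAddHom fun i =>
    mk.comp ((TensorProduct.mk ℤ (ι →₀ Rᵐᵒᵖ) N (Finsupp.single i 1)).toAddMonoidHom)

lemma toFinsupp_mk_tmul (f : ι →₀ Rᵐᵒᵖ) (n : N) :
    toFinsupp R ι N (mk (f ⊗ₜ[ℤ] n)) = f.mapRange (fun s => s.unop • n) (by simp) :=
  rfl

lemma ofFinsupp_toFinsupp (x : Tens R (ι →₀ Rᵐᵒᵖ) N) :
    ofFinsupp R ι N (toFinsupp R ι N x) = x := by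
  obtain ⟨t, rfl⟩ := mk_surjective x
  induction t using TensorProduct.induction_on with
  | zero => simp
  | add a b ha hb => rw [map_add, map_add, map_add, ha, hb]
  | tmul f n =>
    induction f using Finsupp.induction_linear with
    | zero => rw [TensorProduct.zero_tmul, map_zero, map_zero, map_zero]
    | add a b ha hb => rw [TensorProduct.add_tmul, map_add, map_add, map_add, ha, hb]
    | single i s =>
      rw [toFinsupp_mk_tmul, Finsupp.mapRange_single, ofFinsupp, Finsupp.liftAddHom_apply_single]
      change mk (Finsupp.single i 1 ⊗ₜ[ℤ] (s.unop • n)) = _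
      rw [← mk_op_smul_tmul, MulOpposite.op_unop, Finsupp.smul_single_one]

lemma toFinsupp_tmap (g : N →ₗ[R] N') (x : Tens R (ι →₀ Rᵐᵒᵖ) N) :
    toFinsupp R ι N' (tmap LinearMap.id g x)
      = Finsupp.mapRange.addMonoidHom g.toAddMonoidHom (toFinsupp R ι N x) := by
  obtain ⟨t, rfl⟩ := mk_surjective x
  induction t using TensorProduct.induction_on with
  | zero => simp
  | add a b ha hb => simp only [map_add, ha, hb]
  | tmul f n =>
    change toFinsupp R ι N' (mk (f ⊗ₜ[ℤ] g n)) = _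
    ext i
    simp [toFinsupp_mk_tmul]

theorem flatRight_finsupp : FlatRight R (ι →₀ Rᵐᵒᵖ) := by
  intro N N' _ _ _ _ g hg a b hab
  have h : Finsupp.mapRange.addMonoidHom g.toAddMonoidHom (toFinsupp R ι N a) =
      Finsupp.mapRange.addMonoidHom g.toAddMonoidHom (toFinsupp R ι N b) := by
    rw [← toFinsupp_tmap, ← toFinsupp_tmap, hab]
  rw [← ofFinsupp_toFinsupp a, ← ofFinsupp_toFinsupp b,
    Finsupp.mapRange_injective _ (map_zero g) hg h]

end Free

section Tor

variable {R : Type u} [Ring R] {M P F : Type u} [AddCommGroup M] [Module Rᵐᵒᵖ M]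
  [AddCommGroup P] [Module R P] [AddCommGroup F] [Module R F]

-- A chase in the diagram `(H ↪ G ↠ M) ⊗_R (K ↪ P ↠ F)`, where `H = ker π` and `K = ker p`.
theorem tmap_ker_subtype_injective_of_flatRight {G : Type u} [AddCommGroup G] [Module Rᵐᵒᵖ G]
    (hG : FlatRight R G) {π : G →ₗ[Rᵐᵒᵖ] M} (hπ : Function.Surjective π)
    (hF : FlatLeft R F) {p : P →ₗ[R] F} (hp : Function.Surjective p) :
    Function.Injective (tmap (LinearMap.id : M →ₗ[Rᵐᵒᵖ] M) (LinearMap.ker p).subtype) := by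
  set H := LinearMap.ker π
  set K := LinearMap.ker p
  have exact_H {N : Type u} [AddCommGroup N] [Module R N] :=
    tmap_exact_left (N := N) (LinearMap.exact_subtype_ker_map π) hπ
  have exact_K {M : Type u} [AddCommGroup M] [Module Rᵐᵒᵖ M] :=
    tmap_exact_right (M := M) (LinearMap.exact_subtype_ker_map p) hp
  rw [injective_iff_map_eq_zero]
  intro x hx
  obtain ⟨y, rfl⟩ := tmap_surjective (g := (LinearMap.id : K →ₗ[R] K)) hπ Function.surjective_id x
  obtain ⟨z, hz⟩ := (exact_H (tmap LinearMap.id K.subtype y)).1 (by rwa [tmap_comm])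
  have hz0 : tmap LinearMap.id p z = 0 := by
    refine hF H G H.subtype H.injective_subtype ?_
    rw [map_zero, tmap_comm, hz]
    exact exact_K.apply_apply_eq_zero y
  obtain ⟨w, rfl⟩ := (exact_K z).1 hz0
  have hw : tmap H.subtype LinearMap.id w = y := by
    refine hG K P K.subtype K.injective_subtype ?_
    rw [← tmap_comm]
    exact hz
  rw [← hw]
  exact exact_H.apply_apply_eq_zero w

theorem tmap_ker_subtype_injective (hF : FlatLeft R F) {p : P →ₗ[R] F}
    (hp : Function.Surjective p) :
    Function.Injective (tmap (LinearMap.id : M →ₗ[Rᵐᵒᵖ] M) (LinearMap.ker p).subtype) :=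
  tmap_ker_subtype_injective_of_flatRight flatRight_finsupp
    (π := Finsupp.linearCombination Rᵐᵒᵖ (id : M → M))
    (fun m => ⟨Finsupp.single m 1, by simp⟩) hF hp

end Tor

section Adjunction

variable {R S : Type u} [Ring R] [Ring S]
  {E : Type u} [AddCommGroup E] [Module R E] [Module Sᵐᵒᵖ E] [SMulCommClass R Sᵐᵒᵖ E]
  {I : Type u} [AddCommGroup I] [Module R I]
  {N N' : Type u} [AddCommGroup N] [Module S N] [AddCommGroup N'] [Module S N']

variable (S E N) in
def tmapLeftRingHom : Module.End Sᵐᵒᵖ E →+* AddMonoid.End (Tens S E N) where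
  toFun f := tmap f LinearMap.id
  map_one' := AddMonoidHom.ext tmap_id_apply
  map_mul' f g := AddMonoidHom.ext fun x => by
    change tmap (f ∘ₗ g) _ x = tmap f LinearMap.id (tmap g LinearMap.id x)
    rw [tmap_tmap, LinearMap.id_comp]
  map_zero' := tmap_zero_left _
  map_add' f g := tmap_add_left f g _

instance : Module R (Tens S E N) :=
  Module.compHom _ ((tmapLeftRingHom S E N).comp (Module.toModuleEnd Sᵐᵒᵖ E))

lemma smul_def (r : R) (x : Tens S E N) :
    r • x = tmap (DistribSMul.toLinearMap Sᵐᵒᵖ E r) LinearMap.id x :=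
  rfl

lemma smul_mk_tmul (r : R) (e : E) (n : N) :
    r • (mk (e ⊗ₜ[ℤ] n) : Tens S E N) = mk ((r • e) ⊗ₜ[ℤ] n) :=
  rfl

variable (E) in
def tmapLinear (g : N →ₗ[S] N') : Tens S E N →ₗ[R] Tens S E N' where
  toFun := tmap LinearMap.id g
  map_add' := map_add _
  map_smul' r x := by
    simp only [smul_def, RingHom.id_apply]
    exact (tmap_comm _ g x).symm

def uncurry (h : N →ₗ[S] E →ₗ[R] I) : Tens S E N →ₗ[R] I where
  toFun := lift (LinearMap.mk₂ ℤ (fun e n => h n e) (fun _ _ _ => map_add _ _ _)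
    (fun _ _ _ => map_zsmul _ _ _) (fun _ _ _ => by simp) (fun _ _ _ => by simp))
    fun s e n => (LinearMap.congr_fun (h.map_smul s n) e).symm
  map_add' := map_add _
  map_smul' r x := by
    obtain ⟨t, rfl⟩ := mk_surjective x
    induction t using TensorProduct.induction_on with
    | zero => simp
    | tmul e n => exact (h n).map_smul r e
    | add a b ha hb => simp_all only [map_add, smul_add]

def curry (g : Tens S E N →ₗ[R] I) : N →ₗ[S] E →ₗ[R] I where
  toFun n :=
    { toFun := fun e => g (mk (e ⊗ₜ[ℤ] n))
      map_add' := fun e e' => by rw [TensorProduct.add_tmul, map_add, map_add]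
      map_smul' := fun r e => by rw [← map_smul, smul_mk_tmul]; rfl }
  map_add' n n' := by ext e; simp [TensorProduct.tmul_add]
  map_smul' s n := by
    ext e
    exact congrArg g (mk_op_smul_tmul s e n).symm

theorem exists_comp_subtype_eq_of_tmap_injective (hI : Module.Injective R I)
    {P : Type u} [AddCommGroup P] [Module S P] {K : Submodule S P}
    (hK : Function.Injective (tmap (LinearMap.id : E →ₗ[Sᵐᵒᵖ] E) K.subtype))
    (h : K →ₗ[S] E →ₗ[R] I) : ∃ g : P →ₗ[S] E →ₗ[R] I, g ∘ₗ K.subtype = h := by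
  obtain ⟨g, hg⟩ := hI.out (tmapLinear E K.subtype) hK (uncurry h)
  refine ⟨curry g, ?_⟩
  ext k e
  exact hg (mk (e ⊗ₜ[ℤ] k))

end Adjunction

end NCT

/-- **`Hom_R(E, I)` is a cotorsion `S`-module.**
Let `R` and `S` be rings, `E` an `R`-`S`-bimodule, and `I` an injective left `R`-module.
Then the left `S`-module `Hom_R(E, I)` is cotorsion, i.e. `Ext¹_S(F, Hom_R(E, I)) = 0`
for every flat left `S`-module `F`. -/
theorem hom_into_injective_is_cotorsion
    (R : Type u) [Ring R] (S : Type u) [Ring S]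
    (E : Type u) [AddCommGroup E] [Module R E] [Module Sᵐᵒᵖ E] [SMulCommClass R Sᵐᵒᵖ E]
    (I : Type u) [AddCommGroup I] [Module R I] (hI : Module.Injective R I) :
    ∀ (F : Type u) [AddCommGroup F] [Module S F], NCT.FlatLeft S F →
      Subsingleton (((Ext ℤ (ModuleCat.{u} S) 1).obj (op (ModuleCat.of S F))).obj
        (ModuleCat.of S (E →ₗ[R] I))) := by
  intro F _ _ hF
  obtain ⟨P⟩ := HasProjectiveResolution.out (Z := ModuleCat.of S F)
  refine P.subsingleton_ext_one_of_forall_extend _ fun h =>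
    NCT.exists_comp_subtype_eq_of_tmap_injective hI ?_ h
  exact NCT.tmap_ker_subtype_injective (p := (P.π.f 0).hom) hF
    ((ModuleCat.epi_iff_surjective _).1 inferInstance)
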